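/- For any α ∈ (0,1) and all ξ ∈ ℝ, the Fourier transform of φ'_α is given by 𝓕(φ'_α)(ξ) = (√π / Γ((α+2)/2)) · ∫_0^∞ e^{-s} s^{(α-1)/2} e^{-π²ξ²/s} ds. -/

import Mathlib

/-!
Subordination to the Gamma function: for `s > 0`,
`(1 + x²)^(-s) = Γ(s)⁻¹ ∫₀^∞ t^(s-1) e^(-t) e^(-t x²) dt`, so the Fourier transform of
`(1 + x²)^(-s)` is an average of Fourier transforms of Gaussians,
`𝓕(e^(-t x²))(ξ) = √(π/t) e^(-π² ξ²/t)`. Fubini applies because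
`∫₀^∞ |t^(s-1) e^(-(1 + x²) t)| dt = Γ(s) (1 + x²)^(-s)` is integrable in `x` once `s > 1/2`;
the theorem is the case `s = (α + 2)/2`.
-/

open MeasureTheory Filter Real
open scoped ENNReal

noncomputable section

/-- Fourier transform of a real-valued function on ℝ, as a complex-valued function:
`𝓕f(ξ) = ∫ e^{-2πixξ} f(x) dx`. -/
def FT (f : ℝ → ℝ) : ℝ → ℂ :=
  VectorFourier.fourierIntegral Real.fourierChar volume (innerₗ ℝ) (fun x => (f x : ℂ))

open scoped FourierTransform

lemma rpow_neg_eq_inv_Gamma_mul_integral {s a : ℝ} (hs : 0 < s) (ha : 0 < a) :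
    a ^ (-s) = (Gamma s)⁻¹ * ∫ t in Set.Ioi 0, t ^ (s - 1) * exp (-(a * t)) := by
  rw [integral_rpow_mul_exp_neg_mul_Ioi hs ha, one_div, inv_rpow ha.le, ← rpow_neg ha.le]
  field_simp [(Gamma_pos_of_pos hs).ne']

lemma fourier_integral_eq_integral_fourier {α E : Type*} [MeasurableSpace α] {μ : Measure α}
    [SFinite μ] [NormedAddCommGroup E] [NormedSpace ℂ E] {H : ℝ → α → E}
    (hH : Integrable (Function.uncurry H) (volume.prod μ)) (ξ : ℝ) :
    𝓕 (fun x => ∫ t, H x t ∂μ) ξ = ∫ t, 𝓕 (fun x => H x t) ξ ∂μ := by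
  simp_rw [Real.fourier_real_eq_integral_exp_smul, ← integral_smul]
  refine integral_integral_swap (hH.bdd_smul 1 ?_ (.of_forall fun p => ?_))
  · exact (by fun_prop : Measurable fun p : ℝ × α =>
      Complex.exp (↑(-2 * π * p.1 * ξ) * Complex.I)).aestronglyMeasurable
  · rw [Complex.norm_exp_ofReal_mul_I]

lemma fourier_const_smul_apply {E : Type*} [NormedAddCommGroup E] [NormedSpace ℂ E]
    (c : ℂ) (f : ℝ → E) (ξ : ℝ) : 𝓕 (c • f) ξ = c • 𝓕 f ξ :=
  congrFun (VectorFourier.fourierIntegral_const_smul _ _ _ f c) ξ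

lemma fourier_exp_neg_mul_sq {t : ℝ} (ht : 0 < t) (ξ : ℝ) :
    𝓕 (fun x : ℝ => ((exp (-(t * x ^ 2)) : ℝ) : ℂ)) ξ =
      ((√(π / t) * exp (-(π ^ 2 * ξ ^ 2) / t) : ℝ) : ℂ) := by
  have hgauss := fourierIntegral_gaussian (b := (t : ℂ)) (by simpa using ht) ((-2 * π * ξ : ℝ) : ℂ)
  rw [Real.fourier_real_eq_integral_exp_smul]
  convert hgauss using 1
  · congr 1
    ext x
    rw [smul_eq_mul, Complex.ofReal_exp]
    congr 1 <;> push_cast <;> ring_nf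
  · rw [Complex.ofReal_mul, Complex.ofReal_exp, sqrt_eq_rpow, Complex.ofReal_cpow (by positivity)]
    push_cast
    congr 2
    field_simp
    ring

lemma integrableOn_rpow_sub_one_mul_exp_neg_mul {s r : ℝ} (hs : 0 < s) (hr : 0 < r) :
    IntegrableOn (fun t : ℝ => t ^ (s - 1) * exp (-(r * t))) (Set.Ioi 0) := by
  simpa only [rpow_one, neg_mul] using
    integrableOn_rpow_mul_exp_neg_mul_rpow (s := s - 1) (by linarith) one_pos hr

lemma integrable_rpow_mul_exp_neg_one_add_sq_mul {s : ℝ} (hs : 1 / 2 < s) :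
    Integrable (Function.uncurry fun x t : ℝ => t ^ (s - 1) * exp (-((1 + x ^ 2) * t)))
      (volume.prod (volume.restrict (Set.Ioi 0))) := by
  have hs0 : 0 < s := by linarith
  have hnorm (x : ℝ) : ∫ t in Set.Ioi 0, ‖t ^ (s - 1) * exp (-((1 + x ^ 2) * t))‖ =
      Gamma s * (1 + ‖x‖ ^ 2) ^ (-(2 * s) / 2) := by
    rw [setIntegral_congr_fun measurableSet_Ioi fun t ht =>
        norm_of_nonneg (mul_nonneg (rpow_nonneg (le_of_lt ht) _) (exp_nonneg _)),
      integral_rpow_mul_exp_neg_mul_Ioi hs0 (by positivity), one_div,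
      inv_rpow (by positivity), ← rpow_neg (by positivity), norm_eq_abs, sq_abs, mul_comm]
    ring_nf
  refine (integrable_prod_iff (by fun_prop)).2
    ⟨.of_forall fun x => integrableOn_rpow_sub_one_mul_exp_neg_mul (r := 1 + x ^ 2) hs0
      (by positivity), ?_⟩
  simp_rw [Function.uncurry_apply_pair, hnorm]
  exact (integrable_rpow_neg_one_add_norm_sq (by simp; linarith)).const_mul _

lemma rpow_sub_one_mul_sqrt_pi_div {t : ℝ} (ht : 0 < t) (s : ℝ) :
    t ^ (s - 1) * √(π / t) = √π * t ^ (s - 3 / 2) := by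
  rw [sqrt_div' _ ht.le, sqrt_eq_rpow t, mul_div_assoc', mul_comm, mul_div_assoc, ← rpow_sub ht]
  ring_nf

theorem fourier_one_add_sq_rpow_neg {s : ℝ} (hs : 1 / 2 < s) (ξ : ℝ) :
    𝓕 (fun x : ℝ => (((1 + x ^ 2) ^ (-s) : ℝ) : ℂ)) ξ =
      ((√π / Gamma s *
        ∫ t in Set.Ioi 0, t ^ (s - 3 / 2) * exp (-t) * exp (-(π ^ 2 * ξ ^ 2) / t) : ℝ) : ℂ) := by
  have hs0 : 0 < s := by linarith
  set K : ℝ → ℝ → ℂ := fun x t =>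
    (((Gamma s)⁻¹ * (t ^ (s - 1) * exp (-((1 + x ^ 2) * t))) : ℝ) : ℂ)
  have hK : (fun x : ℝ => (((1 + x ^ 2) ^ (-s) : ℝ) : ℂ)) = fun x => ∫ t in Set.Ioi 0, K x t := by
    ext x
    simp only [K]
    rw [integral_complex_ofReal, integral_const_mul,
      ← rpow_neg_eq_inv_Gamma_mul_integral hs0 (by positivity)]
  have hKt (t : ℝ) (ht : 0 < t) : 𝓕 (fun x => K x t) ξ =
      ((√π / Gamma s * (t ^ (s - 3 / 2) * exp (-t) * exp (-(π ^ 2 * ξ ^ 2) / t)) : ℝ) : ℂ) := by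
    have hsplit : (fun x => K x t) =
        (((Gamma s)⁻¹ * t ^ (s - 1) * exp (-t) : ℝ) : ℂ) •
          fun x : ℝ => ((exp (-(t * x ^ 2)) : ℝ) : ℂ) := by
      ext x
      simp only [K, Pi.smul_apply, smul_eq_mul, ← Complex.ofReal_mul, mul_assoc, ← exp_add]
      ring_nf
    rw [hsplit, fourier_const_smul_apply, fourier_exp_neg_mul_sq ht, smul_eq_mul,
      ← Complex.ofReal_mul]
    congr 1
    linear_combination (Gamma s)⁻¹ * exp (-t) * exp (-(π ^ 2 * ξ ^ 2) / t) *
      rpow_sub_one_mul_sqrt_pi_div ht s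
  rw [hK, fourier_integral_eq_integral_fourier
      ((integrable_rpow_mul_exp_neg_one_add_sq_mul hs).const_mul _).ofReal,
    setIntegral_congr_fun measurableSet_Ioi hKt, integral_complex_ofReal, integral_const_mul]

theorem fourier_transform_phi_alpha
    (α : ℝ) (hα : α ∈ Set.Ioo (0 : ℝ) 1) (ξ : ℝ) :
    FT (fun x => (1 + x ^ 2) ^ (-(α + 2) / 2)) ξ =
      ((Real.sqrt π / Real.Gamma ((α + 2) / 2)) *
        ∫ s in Set.Ioi (0 : ℝ),
          Real.exp (-s) * s ^ ((α - 1) / 2) * Real.exp (-(π ^ 2 * ξ ^ 2) / s) : ℝ) := by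
  have hs : 1 / 2 < (α + 2) / 2 := by linarith [hα.1]
  rw [show -(α + 2) / 2 = -((α + 2) / 2) by ring]
  refine (fourier_one_add_sq_rpow_neg hs ξ).trans ?_
  congr 4 with t
  rw [show (α + 2) / 2 - 3 / 2 = (α - 1) / 2 by ring]
  ring
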